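/- Every finite chordal graph admits a perfect elimination ordering of its vertices. -/

import Mathlib

/-- An induced (chordless) cycle of length `p` in a simple graph. -/
def SimpleGraph.IsInducedCycle {V : Type*} (G : SimpleGraph V) (p : ℕ) : Prop :=
  ∃ f : ZMod p → V, Function.Injective f ∧
    ∀ i j : ZMod p, G.Adj (f i) (f j) ↔ j = i + 1 ∨ i = j + 1

/-- A graph is chordal if it has no induced cycle of length at least 4. -/
def SimpleGraph.Chordal {V : Type*} (G : SimpleGraph V) : Prop :=
  ∀ p : ℕ, 4 ≤ p → ¬ G.IsInducedCycle p

/-! By Dirac's lemma, a chordal graph on a vertex set `U` is complete or has two non-adjacent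
simplicial vertices; removing a simplicial vertex, numbering it after all the others and
repeating gives a perfect elimination ordering.

For Dirac's lemma, let `a, b ∈ U` be non-adjacent, `A` the component of `a` in `U` minus the
closed neighbourhood of `b`, and `S` the neighbours of `b` that have a neighbour in `A`. Two
non-adjacent `s, t ∈ S`, joined by a shortest path through `A` and closed up by `b`, would form
an induced cycle of length at least 4, so `S` is a clique. The neighbours of `A` in `U` lie in
`A ∪ S ⊊ U`, so by induction `G[A ∪ S]` has a simplicial vertex in `A`, which is then
simplicial in `G[U]`. -/

lemma ZMod.eq_add_one_iff {n : ℕ} [NeZero n] (i j : ZMod n) :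
    j = i + 1 ↔ j.val = i.val + 1 ∨ (i.val + 1 = n ∧ j.val = 0) := by
  rw [← ZMod.val_injective n |>.eq_iff, ZMod.val_add, ZMod.val_one_eq_one_mod, Nat.add_mod_mod]
  by_cases h : i.val + 1 = n
  · rw [h, Nat.mod_self]
    have := j.val_lt
    omega
  · rw [Nat.mod_eq_of_lt (by have := i.val_lt; omega)]
    omega

namespace SimpleGraph

variable {V : Type*} {G : SimpleGraph V}

open Walk

namespace Walk

lemma IsChordless.adj_getVert_iff {u v : V} {p : G.Walk u v} (hc : p.IsChordless)
    (hp : p.IsPath) {i j : ℕ} (hi : i ≤ p.length) (hj : j ≤ p.length) :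
    G.Adj (p.getVert i) (p.getVert j) ↔ j = i + 1 ∨ i = j + 1 := by
  refine ⟨fun h => ?_, ?_⟩
  · obtain ⟨k, hk, hedge⟩ := p.mk_mem_edges_iff_exists.1 <|
      hc.mem_edges (p.getVert_mem_support i) (p.getVert_mem_support j) h
    have hinj {a b : ℕ} (ha : a ≤ p.length) (hb : b ≤ p.length)
        (hab : p.getVert a = p.getVert b) : a = b := hp.getVert_injOn ha hb hab
    rcases Sym2.eq_iff.1 hedge with ⟨h1, h2⟩ | ⟨h1, h2⟩
    · have := hinj (by omega) hi h1
      have := hinj (by omega) hj h2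
      omega
    · have := hinj (by omega) hj h1
      have := hinj (by omega) hi h2
      omega
  · rintro (rfl | rfl)
    · exact p.adj_getVert_succ (by omega)
    · exact (p.adj_getVert_succ (by omega)).symm

/-- A shortest walk among those inside the vertex set of `w`, with its cycles bypassed;
a chord would give a shorter one. -/
lemma exists_isPath_isChordless_support_subset {u v : V} (w : G.Walk u v) :
    ∃ p : G.Walk u v, p.IsPath ∧ p.IsChordless ∧ p.support ⊆ w.support := by
  classical
  obtain ⟨q, hqw, hmin⟩ := (measure fun q : G.Walk u v => q.length).wf.has_min
    {q | q.support ⊆ w.support} ⟨w, List.Subset.refl _⟩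
  set p := q.bypass
  have hpw : p.support ⊆ w.support := List.Subset.trans q.support_bypass_subset_support hqw
  have hshort {i j : ℕ} (hij : i + 1 < j) (hj : j ≤ p.length) :
      ¬ G.Adj (p.getVert i) (p.getVert j) := fun hadj => by
    let r : G.Walk u v := (p.take i).append (cons hadj (p.drop j))
    have hr : r.support ⊆ w.support := by
      intro x hx
      simp only [r, mem_support_append_iff, support_cons, List.mem_cons, support_take,
        drop_support_eq_support_drop_min] at hx
      rcases hx with hx | rfl | hx
      · exact hpw (List.mem_of_mem_take hx)
      · exact hpw (p.getVert_mem_support i)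
      · exact hpw (List.mem_of_mem_drop hx)
    have hlen : r.length < q.length := by
      have : p.length ≤ q.length := q.length_bypass_le_length
      simp only [r, length_append, length_cons, take_length, drop_length]
      omega
    exact hmin r hr hlen
  have hedge {i j : ℕ} (hij : i < j) (hj : j ≤ p.length)
      (hadj : G.Adj (p.getVert i) (p.getVert j)) : s(p.getVert i, p.getVert j) ∈ p.edges := by
    obtain rfl : j = i + 1 := by
      by_contra hne
      exact hshort (by omega) hj hadj
    exact p.mk_mem_edges_iff_exists.2 ⟨i, hj, rfl⟩
  refine ⟨p, q.bypass_isPath, isChordless_iff_forall_mem_edges.2 fun x y hx hy hadj => ?_, hpw⟩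
  obtain ⟨i, rfl, hi⟩ := mem_support_iff_exists_getVert.1 hx
  obtain ⟨j, rfl, hj⟩ := mem_support_iff_exists_getVert.1 hy
  rcases lt_trichotomy i j with hij | rfl | hij
  · exact hedge hij hj hadj
  · exact absurd hadj (G.loopless.irrefl _)
  · exact Sym2.eq_swap ▸ hedge hij hi hadj.symm

end Walk

lemma isInducedCycle_of_adj_iff {n : ℕ} [NeZero n] (g : ℕ → V)
    (hinj : Set.InjOn g (Set.Iio n))
    (hadj : ∀ i < n, ∀ j < n, G.Adj (g i) (g j) ↔
      j = i + 1 ∨ i = j + 1 ∨ (i + 1 = n ∧ j = 0) ∨ (j + 1 = n ∧ i = 0)) :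
    G.IsInducedCycle n := by
  refine ⟨fun i => g i.val, fun i j hij => ZMod.val_injective n <|
    hinj (Set.mem_Iio.2 i.val_lt) (Set.mem_Iio.2 j.val_lt) hij, fun i j => ?_⟩
  rw [hadj _ i.val_lt _ j.val_lt, ZMod.eq_add_one_iff, ZMod.eq_add_one_iff]
  tauto

lemma Walk.IsChordless.isInducedCycle_length_add_two {s t b : V} {p : G.Walk s t}
    (hc : p.IsChordless) (hp : p.IsPath) (hb : b ∉ p.support)
    (hadj : ∀ i ≤ p.length, G.Adj (p.getVert i) b ↔ i = 0 ∨ i = p.length) :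
    G.IsInducedCycle (p.length + 2) := by
  set L := p.length
  let g : ℕ → V := fun k => if k ≤ L then p.getVert k else b
  refine isInducedCycle_of_adj_iff g (fun i hi j hj hij => ?_) fun i hi j hj => ?_
  · simp only [Set.mem_Iio] at hi hj
    by_cases hiL : i ≤ L <;> by_cases hjL : j ≤ L <;>
      simp only [g, hiL, hjL, if_true, if_false] at hij
    · exact hp.getVert_injOn hiL hjL hij
    · exact absurd (hij ▸ p.getVert_mem_support i) hb
    · exact absurd (hij ▸ p.getVert_mem_support j) hb
    · omega
  · by_cases hiL : i ≤ L <;> by_cases hjL : j ≤ L <;>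
      simp only [g, hiL, hjL, if_true, if_false]
    · rw [hc.adj_getVert_iff hp hiL hjL]
      omega
    · rw [hadj i hiL]
      omega
    · rw [G.adj_comm, hadj j hjL]
      omega
    · simp only [SimpleGraph.irrefl, false_iff]
      omega

lemma Chordal.adj_of_walk_avoiding_nbhd (hG : G.Chordal) {s t b : V} (hs : G.Adj s b)
    (ht : G.Adj t b) (hst : s ≠ t) (w : G.Walk s t)
    (hw : ∀ x ∈ w.support, x = s ∨ x = t ∨ (x ≠ b ∧ ¬ G.Adj x b)) :
    G.Adj s t := by
  by_contra hnadj
  obtain ⟨p, hp, hc, hpw⟩ := w.exists_isPath_isChordless_support_subset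
  have hlen : 2 ≤ p.length := by
    have h0 : p.length ≠ 0 := fun h => hst (eq_of_length_eq_zero h)
    have h1 : p.length ≠ 1 := fun h => hnadj (adj_of_length_eq_one h)
    omega
  refine hG _ (by omega) <|
    hc.isInducedCycle_length_add_two (b := b) hp (fun hb => ?_) fun i hi => ?_
  · rcases hw b (hpw hb) with rfl | rfl | ⟨hbb, -⟩
    exacts [G.loopless.irrefl _ hs, G.loopless.irrefl _ ht, hbb rfl]
  · refine ⟨fun hib => ?_, ?_⟩
    · rcases hw _ (hpw (p.getVert_mem_support i)) with h | h | h
      · exact Or.inl (hp.getVert_injOn hi (Nat.zero_le _) (h.trans p.getVert_zero.symm))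
      · exact Or.inr (hp.getVert_injOn hi (Nat.le_refl p.length) (h.trans p.getVert_length.symm))
      · exact absurd hib h.2
    · rintro (rfl | rfl)
      · simpa using hs
      · simpa using ht

lemma Chordal.isClique_separator (hG : G.Chordal) {a b : V} {X : Set V}
    (hX : ∀ x ∈ X, x ≠ b ∧ ¬ G.Adj x b) :
    G.IsClique {s | G.Adj s b ∧ ∃ x, G.Adj s x ∧ ∃ w : G.Walk a x, ∀ y ∈ w.support, y ∈ X} := by
  rintro s ⟨hsb, x, hsx, wx, hwx⟩ t ⟨htb, y, hty, wy, hwy⟩ hst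
  refine hG.adj_of_walk_avoiding_nbhd hsb htb hst
    (cons hsx (wx.reverse.append (wy.concat hty.symm))) fun z hz => ?_
  simp only [support_cons, mem_support_append_iff, support_reverse, support_concat,
    List.mem_cons, List.mem_reverse, List.mem_append, List.not_mem_nil, or_false] at hz
  rcases hz with rfl | hz | hz | rfl
  · exact Or.inl rfl
  · exact Or.inr (Or.inr (hX z (hwx z hz)))
  · exact Or.inr (Or.inr (hX z (hwy z hz)))
  · exact Or.inr (Or.inl rfl)

def IsSimplicialIn (G : SimpleGraph V) (U : Set V) (v : V) : Prop :=
  G.IsClique (G.neighborSet v ∩ U)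

lemma Chordal.exists_isSimplicialIn_not_adj (hG : G.Chordal) {U : Finset V}
    (ih : ∀ W ⊂ U, G.IsClique (W : Set V) ∨ ∃ x ∈ W, ∃ y ∈ W,
      x ≠ y ∧ ¬ G.Adj x y ∧ G.IsSimplicialIn W x ∧ G.IsSimplicialIn W y)
    {a b : V} (ha : a ∈ U) (hb : b ∈ U) (hab : a ≠ b) (hnadj : ¬ G.Adj a b) :
    ∃ z ∈ U, z ≠ b ∧ ¬ G.Adj z b ∧ G.IsSimplicialIn U z := by
  classical
  set X : Set V := {x | x ∈ U ∧ x ≠ b ∧ ¬ G.Adj x b}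
  set A : Set V := {x | ∃ w : G.Walk a x, ∀ y ∈ w.support, y ∈ X}
  set S : Set V := {s | G.Adj s b ∧ ∃ x, G.Adj s x ∧ x ∈ A}
  have hAX : A ⊆ X := fun x ⟨w, hw⟩ => hw x w.end_mem_support
  have haA : a ∈ A := ⟨nil, by simpa [X] using ⟨ha, hab, hnadj⟩⟩
  have hS : G.IsClique S := hG.isClique_separator fun x hx => hx.2
  have hnbr : ∀ z ∈ A, G.neighborSet z ∩ U ⊆ A ∪ S := by
    rintro z hz y ⟨hzy : G.Adj z y, hyU⟩
    by_cases hyX : y ∈ X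
    · obtain ⟨w, hw⟩ := hz
      refine Or.inl ⟨w.concat hzy, fun x hx => ?_⟩
      simp only [support_concat, List.mem_append, List.mem_singleton] at hx
      rcases hx with hx | rfl
      exacts [hw x hx, hyX]
    · have hyb : G.Adj y b := by
        by_contra hyb
        obtain rfl : y = b := by by_contra hyb'; exact hyX ⟨hyU, hyb', hyb⟩
        exact (hAX hz).2.2 hzy
      exact Or.inr ⟨hyb, z, hzy.symm, hz⟩
  set W := U.filter (· ∈ A ∪ S)
  have hbAS : b ∉ A ∪ S := by
    rintro (hbA | ⟨hbb, -⟩)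
    exacts [(hAX hbA).2.1 rfl, G.loopless.irrefl _ hbb]
  obtain ⟨z, hzA, hz⟩ : ∃ z ∈ A, G.IsSimplicialIn W z := by
    rcases ih W (Finset.filter_ssubset.2 ⟨b, hb, hbAS⟩) with
      hW | ⟨x, hx, y, hy, hxy, hnxy, hsx, hsy⟩
    · exact ⟨a, haA, hW.subset Set.inter_subset_right⟩
    · simp only [W, Finset.mem_filter] at hx hy
      by_cases hxA : x ∈ A
      · exact ⟨x, hxA, hsx⟩
      by_cases hyA : y ∈ A
      · exact ⟨y, hyA, hsy⟩
      exact absurd (hS (hx.2.resolve_left hxA) (hy.2.resolve_left hyA) hxy) hnxy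
  obtain ⟨hzU, hzb, hnzb⟩ := hAX hzA
  have hsub : G.neighborSet z ∩ U ⊆ G.neighborSet z ∩ W := fun y hy =>
    ⟨hy.1, by simpa [W] using ⟨hy.2, hnbr z hzA hy⟩⟩
  exact ⟨z, hzU, hzb, hnzb, IsClique.subset hsub hz⟩

theorem Chordal.isClique_or_exists_isSimplicialIn (hG : G.Chordal) (U : Finset V) :
    G.IsClique (U : Set V) ∨ ∃ a ∈ U, ∃ b ∈ U,
      a ≠ b ∧ ¬ G.Adj a b ∧ G.IsSimplicialIn U a ∧ G.IsSimplicialIn U b := by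
  induction U using Finset.strongInduction with
  | H U ih =>
  by_cases hU : G.IsClique (U : Set V)
  · exact Or.inl hU
  obtain ⟨a, ha, b, hb, hab, hnadj⟩ : ∃ a ∈ U, ∃ b ∈ U, a ≠ b ∧ ¬ G.Adj a b := by
    simpa [IsClique, Set.Pairwise] using hU
  obtain ⟨z, hz, hzb, hnzb, hsz⟩ := hG.exists_isSimplicialIn_not_adj ih ha hb hab hnadj
  obtain ⟨z', hz', hz'z, hnz'z, hsz'⟩ :=
    hG.exists_isSimplicialIn_not_adj ih hb hz hzb.symm fun h => hnzb h.symm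
  exact Or.inr ⟨z', hz', z, hz, hz'z, hnz'z, hsz', hsz⟩

lemma Chordal.exists_isSimplicialIn (hG : G.Chordal) {U : Finset V} (hU : U.Nonempty) :
    ∃ v ∈ U, G.IsSimplicialIn U v := by
  obtain ⟨u, hu⟩ := hU
  rcases hG.isClique_or_exists_isSimplicialIn U with hclique | ⟨a, ha, -, -, -, -, hsa, -⟩
  exacts [⟨u, hu, hclique.subset Set.inter_subset_right⟩, ⟨a, ha, hsa⟩]

lemma Chordal.exists_perfect_elimination_order_on (hG : G.Chordal) (U : Finset V) :
    ∃ f : V → ℕ, Set.InjOn f U ∧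
      ∀ v ∈ U, G.IsClique {u | G.Adj v u ∧ f u < f v ∧ u ∈ U} := by
  classical
  induction U using Finset.strongInduction with
  | H U ih =>
  rcases U.eq_empty_or_nonempty with rfl | hU
  · exact ⟨fun _ => 0, by simp, by simp⟩
  obtain ⟨v, hvU, hv⟩ := hG.exists_isSimplicialIn hU
  obtain ⟨f, hinj, hf⟩ := ih (U.erase v) (Finset.erase_ssubset hvU)
  set N := (U.erase v).sup f + 1
  have hlt {u : V} (hu : u ∈ U) (huv : u ≠ v) : f u < N :=
    Nat.lt_succ_of_le (Finset.le_sup (Finset.mem_erase.2 ⟨huv, hu⟩))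
  refine ⟨Function.update f v N, fun x hx y hy hxy => ?_, fun u hu => ?_⟩
  · by_cases hxv : x = v <;> by_cases hyv : y = v
    · exact hxv.trans hyv.symm
    · rw [hxv, Function.update_self, Function.update_of_ne hyv] at hxy
      exact absurd hxy (hlt hy hyv).ne'
    · rw [hyv, Function.update_self, Function.update_of_ne hxv] at hxy
      exact absurd hxy (hlt hx hxv).ne
    · simp only [Function.update_of_ne hxv, Function.update_of_ne hyv] at hxy
      exact hinj (Finset.mem_erase.2 ⟨hxv, hx⟩) (Finset.mem_erase.2 ⟨hyv, hy⟩) hxy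
  · by_cases huv : u = v
    · subst huv
      refine IsClique.subset ?_ hv
      exact fun w hw => ⟨hw.1, hw.2.2⟩
    · refine (hf u (Finset.mem_erase.2 ⟨huv, hu⟩)).subset ?_
      rintro w ⟨huw, hwu, hwU⟩
      have hwv : w ≠ v := by
        rintro rfl
        simp only [Function.update_self, Function.update_of_ne huv] at hwu
        exact (hlt hu huv).asymm hwu
      rw [Function.update_of_ne hwv, Function.update_of_ne huv] at hwu
      exact ⟨huw, hwu, Finset.mem_erase.2 ⟨hwv, hwU⟩⟩

end SimpleGraph

/-- Every finite chordal graph admits a perfect elimination ordering: an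
injective numbering of the vertices such that for each vertex `v` the earlier
neighbours of `v` form a clique. -/
theorem chordal_exists_perfect_elimination_order {V : Type*} [Fintype V]
    (G : SimpleGraph V) (h : G.Chordal) :
    ∃ f : V → ℕ, Function.Injective f ∧
      ∀ v : V, G.IsClique {u : V | G.Adj v u ∧ f u < f v} := by
  obtain ⟨f, hinj, hf⟩ := h.exists_perfect_elimination_order_on Finset.univ
  refine ⟨f, by simpa using hinj, fun v => (hf v (Finset.mem_univ v)).subset ?_⟩
  exact fun u hu => ⟨hu.1, hu.2, Finset.mem_univ u⟩
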